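/- arXiv:2502.14750 — 2 statements merged into one kernel-verified Lean document; each statement's English description precedes it below -/
import Mathlib

section
/- Let ψ : [-1,1] → ℝ be smooth, increasing, with ψ(t)=0 for t ≤ -ε, ψ(0)>0, and ψ(t)=t for t ≥ ε, where 0 < ε < 1/√2. Define F₁(t,q) = (ψ(t)q, ψ(-t)q) from [-1,1] × S^{n-1} into ℝ^n × ℝ^n. Then the pullback of the 1-form λ = ½(x·dy - y·dx) under F₁ equals df₁, where f₁(t,q) = -½ ∫_{-1}^t (ψ(τ)ψ'(-τ) + ψ(-τ)ψ'(τ)) dτ. In particular the image of F₁ is an exact Lagrangian with respect to dλ. -/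
open scoped InnerProductSpace

/-- The pullback of the Liouville form `λ = ½(x·dy - y·dx)` under
`F₁(t,q) = (ψ(t)q, ψ(-t)q)` equals `df₁`: it vanishes on tangent directions
`v ⊥ q` of the sphere, and on `∂t` it equals the derivative of
`f₁(t) = -½∫_{-1}^t (ψψ'(-·) + ψ(-·)ψ')`.  Hence the image of `F₁` is an
exact Lagrangian for `dλ`. -/
theorem stmt0 (n : ℕ) (ε : ℝ) (hε : 0 < ε) (hε' : ε < 1 / Real.sqrt 2)
    (ψ : ℝ → ℝ) (hψ : ContDiff ℝ (⊤ : ℕ∞) ψ) (hmono : MonotoneOn ψ (Set.Icc (-1 : ℝ) 1))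
    (hzero : ∀ t ≤ -ε, ψ t = 0) (hψ0 : 0 < ψ 0) (hid : ∀ t ≥ ε, ψ t = t)
    (t : ℝ) (ht : t ∈ Set.Icc (-1 : ℝ) 1)
    (q v : EuclideanSpace ℝ (Fin n)) (hq : ‖q‖ = 1) (hv : ⟪q, v⟫_ℝ = 0) :
    -- the pullback of λ on sphere directions vanishes
    (1 / 2) * (⟪ψ t • q, ψ (-t) • v⟫_ℝ - ⟪ψ (-t) • q, ψ t • v⟫_ℝ) = 0 ∧
    -- the pullback of λ on ∂t equals f₁'(t)
    HasDerivAt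
      (fun s : ℝ => -(1 / 2) * ∫ τ in (-1 : ℝ)..s,
        (ψ τ * deriv ψ (-τ) + ψ (-τ) * deriv ψ τ))
      ((1 / 2) * (⟪ψ t • q, (-(deriv ψ (-t))) • q⟫_ℝ - ⟪ψ (-t) • q, (deriv ψ t) • q⟫_ℝ)) t := by
  constructor
  · rw [real_inner_smul_left, real_inner_smul_left, real_inner_smul_right,
      real_inner_smul_right, hv]
    ring
  · have hψc : Continuous ψ := hψ.continuous
    have hψ'c : Continuous (deriv ψ) := hψ.continuous_deriv (by simp)
    have hcont : Continuous (fun τ : ℝ => ψ τ * deriv ψ (-τ) + ψ (-τ) * deriv ψ τ) := by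
      fun_prop
    have h := (hcont.integral_hasStrictDerivAt (-1 : ℝ) t).hasDerivAt.const_mul (-(1/2) : ℝ)
    refine h.congr_deriv ?_
    have hq2 : ⟪q, q⟫_ℝ = 1 := by
      rw [real_inner_self_eq_norm_sq, hq]; norm_num
    rw [real_inner_smul_left, real_inner_smul_left, real_inner_smul_right,
      real_inner_smul_right, hq2]
    ring
end

section
/- With the same hypotheses on ψ, define F₂(t,q) = (ψ(t)q, -ψ(-t)q) from [-1,1] × S^{n-1} into ℝ^n × ℝ^n. Then F₂*λ = df₂ where f₂(t,q) = ½ ∫_{-1}^t (ψ(τ)ψ'(-τ) + ψ(-τ)ψ'(τ)) dτ, so the image of F₂ is an exact Lagrangian for dλ. -/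
open scoped InnerProductSpace

/-- The pullback of `λ = ½(x·dy - y·dx)` under `F₂(t,q) = (ψ(t)q, -ψ(-t)q)`
equals `df₂` where `f₂(t) = ½∫_{-1}^t (ψψ'(-·) + ψ(-·)ψ')`, so the image of
`F₂` is an exact Lagrangian for `dλ`. -/
theorem stmt1 (n : ℕ) (ε : ℝ) (hε : 0 < ε) (hε' : ε < 1 / Real.sqrt 2)
    (ψ : ℝ → ℝ) (hψ : ContDiff ℝ (⊤ : ℕ∞) ψ) (hmono : MonotoneOn ψ (Set.Icc (-1 : ℝ) 1))
    (hzero : ∀ t ≤ -ε, ψ t = 0) (hψ0 : 0 < ψ 0) (hid : ∀ t ≥ ε, ψ t = t)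
    (t : ℝ) (ht : t ∈ Set.Icc (-1 : ℝ) 1)
    (q v : EuclideanSpace ℝ (Fin n)) (hq : ‖q‖ = 1) (hv : ⟪q, v⟫_ℝ = 0) :
    -- the pullback of λ on sphere directions vanishes
    (1 / 2) * (⟪ψ t • q, (-(ψ (-t))) • v⟫_ℝ - ⟪(-(ψ (-t))) • q, ψ t • v⟫_ℝ) = 0 ∧
    -- the pullback of λ on ∂t equals f₂'(t)
    HasDerivAt
      (fun s : ℝ => (1 / 2) * ∫ τ in (-1 : ℝ)..s,
        (ψ τ * deriv ψ (-τ) + ψ (-τ) * deriv ψ τ))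
      ((1 / 2) * (⟪ψ t • q, (deriv ψ (-t)) • q⟫_ℝ - ⟪(-(ψ (-t))) • q, (deriv ψ t) • q⟫_ℝ)) t := by
  have hqq : ⟪q, q⟫_ℝ = 1 := by
    have := real_inner_self_eq_norm_sq q
    rw [hq] at this; simpa using this
  constructor
  · simp [inner_smul_left, inner_smul_right, hv]
  · have hcont : Continuous fun τ : ℝ => ψ τ * deriv ψ (-τ) + ψ (-τ) * deriv ψ τ := by
      have hd : Continuous (deriv ψ) := hψ.continuous_deriv (by simp)
      have hc : Continuous ψ := hψ.continuous
      fun_prop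
    have h := intervalIntegral.integral_hasDerivAt_right
      (hcont.intervalIntegrable (-1) t)
      (hcont.stronglyMeasurableAtFilter _ _) hcont.continuousAt
    have h2 := h.const_mul (1 / 2 : ℝ)
    convert h2 using 1
    · rfl
    · rfl
    simp [inner_smul_left, inner_smul_right, hqq, hq]
    ring
end
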